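/- Let N be an even positive integer, m ≥ 1 an integer with 2^m dividing N, and ψ ∈ Π[N] with ψ̂[0] = ψ̂[N/2] = 0. If the 2^m-sample shifts of ψ are orthonormal, i.e. ⟨ψ, ψ[·−2^m l]⟩ = 1 for l ≡ 0 (mod N/2^m) and = 0 for all other l with 0 ≤ l < N/2^m, then the 2^m-sample shifts of θ = H(ψ) satisfy the same relations: ⟨θ, θ[·−2^m l]⟩ = 1 for l ≡ 0 and = 0 otherwise. -/

import Mathlib

open MeasureTheory

namespace WP

/-- The root of unity ω = e^{2πi/N}. -/
noncomputable def ww (N : ℕ) : ℂ := Complex.exp (2 * Real.pi * Complex.I / N)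

/-- DFT of a signal `x ∈ Π[N]`: x̂[n] = Σ_{k=0}^{N−1} ω^{−kn} x[k]. -/
noncomputable def dft (N : ℕ) (x : ℤ → ℂ) (n : ℤ) : ℂ :=
  ∑ k ∈ Finset.range N, ww N ^ (-((k : ℤ) * n)) * x k

/-- Inner product on `Π[N]`. -/
noncomputable def inner1 (N : ℕ) (x y : ℤ → ℂ) : ℂ :=
  ∑ k ∈ Finset.range N, x k * (starRingEnd ℂ) (y k)

/-- The discrete periodic Hilbert transform, defined via the DFT:
    Ĥ(x)[n] = −i·x̂[n] for 0<n<N/2, i·x̂[n] for N/2<n<N, 0 at n=0 and n=N/2. -/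
noncomputable def hilbertT (N : ℕ) (x : ℤ → ℂ) (k : ℤ) : ℂ :=
  (N : ℂ)⁻¹ * ∑ n ∈ Finset.range N,
    (if 0 < n ∧ n < N / 2 then -Complex.I else if N / 2 < n ∧ n < N then Complex.I else 0) *
      dft N x n * ww N ^ ((k * (n : ℤ)))

/-- The complementary-WP operator `C`, defined via the DFT:
    Ĉ(x)[n] = −i·x̂[n] for 0<n<N/2, i·x̂[n] for N/2<n<N, x̂[0] at 0, x̂[N/2] at N/2. -/
noncomputable def cwpT (N : ℕ) (x : ℤ → ℂ) (k : ℤ) : ℂ :=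
  (N : ℂ)⁻¹ * ∑ n ∈ Finset.range N,
    (if n = 0 ∨ n = N / 2 then 1 else if n < N / 2 then -Complex.I else Complex.I) *
      dft N x n * ww N ^ ((k * (n : ℤ)))

/-- The order-p B-spline b^p(t). -/
noncomputable def bspline (p : ℕ) (t : ℝ) : ℝ :=
  (1 / (Nat.factorial (p - 1) : ℝ)) *
    ∑ k ∈ Finset.range (p + 1),
      (-1 : ℝ) ^ k * (p.choose k : ℝ) * max (t + (p : ℝ) / 2 - (k : ℝ)) 0 ^ (p - 1)

/-- u^p[n] = Σ_{k=−N/2}^{N/2−1} ω^{−kn} b^p(k). -/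
noncomputable def uSeq (N p : ℕ) (n : ℤ) : ℂ :=
  ∑ k ∈ Finset.range N,
    ww N ^ (-(((k : ℤ) - (N : ℤ) / 2) * n)) * (bspline p ((k : ℝ) - (N : ℝ) / 2) : ℂ)

/-- v^p[n] = e^{−πin/N} Σ_{k=−N/2}^{N/2−1} ω^{−kn} b^p(k+1/2). -/
noncomputable def vSeq (N p : ℕ) (n : ℤ) : ℂ :=
  Complex.exp (-Real.pi * Complex.I * n / N) *
    ∑ k ∈ Finset.range N,
      ww N ^ (-(((k : ℤ) - (N : ℤ) / 2) * n)) *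
        (bspline p ((k : ℝ) - (N : ℝ) / 2 + 1 / 2) : ℂ)

/-- The span-two discrete-time B-spline b_{[1]}^p ∈ Π[N]:
    the N-periodic signal with b_{[1]}^p[k] = b^p(k/2)/2 for −N/2 ≤ k ≤ N/2−1. -/
noncomputable def bs1 (N p : ℕ) (k : ℤ) : ℂ :=
  ((bspline p ((((k + (N : ℤ) / 2) % (N : ℤ) - (N : ℤ) / 2 : ℤ) : ℝ) / 2) : ℝ) : ℂ) / 2

/-- Its DFT b̂_{[1]}^p[n] = Σ_{k=−N/2}^{N/2−1} ω^{−kn} b_{[1]}^p[k]. -/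
noncomputable def bhat1 (N p : ℕ) (n : ℤ) : ℂ :=
  ∑ k ∈ Finset.range N,
    ww N ^ (-(((k : ℤ) - (N : ℤ) / 2) * n)) * bs1 N p ((k : ℤ) - (N : ℤ) / 2)

/-- Υ^p[n] = (u^p[2n]² + v^p[2n]²)/4. -/
noncomputable def upsilon (N p : ℕ) (n : ℤ) : ℂ :=
  (uSeq N p (2 * n) ^ 2 + vSeq N p (2 * n) ^ 2) / 4

/-- β[n] = b̂_{[1]}^p[n] / √(Υ^p[n]). -/
noncomputable def betaS (N p : ℕ) (n : ℤ) : ℂ := bhat1 N p n / upsilon N p n ^ ((1 : ℂ) / 2)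

/-- α[n] = ω^n · β[n+N/2]. -/
noncomputable def alphaS (N p : ℕ) (n : ℤ) : ℂ := ww N ^ n * betaS N p (n + (N : ℤ) / 2)

/-- The first-level wavelet packets ψ_{[1],λ}^p, λ = 0,1, defined via their DFTs
    ψ̂_{[1],0}^p[n] = β[n] and ψ̂_{[1],1}^p[n] = α[n]. -/
noncomputable def psi1 (N p lam : ℕ) (k : ℤ) : ℂ :=
  (N : ℂ)⁻¹ * ∑ n ∈ Finset.range N,
    (if lam = 0 then betaS N p n else alphaS N p n) * ww N ^ ((k * (n : ℤ)))

/-! Parseval's identity together with the shift theorem gives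
`⟨x, x[· - a]⟩ = N⁻¹ ∑ₙ |x̂[n]|² ω^{an}`, so every shift inner product of a periodic signal
depends only on `|x̂|`. The Hilbert transform multiplies `x̂[n]` by `∓i` except at `n = 0, N/2`,
where `ψ̂` vanishes; hence `|Ĥψ| = |ψ̂|` and the shifts of `Hψ` have the same inner products
as those of `ψ`. -/

open Finset ComplexConjugate

theorem _root_.Function.Periodic.sum_range_comp_add {M : Type*} [AddCancelCommMonoid M]
    {f : ℤ → M} {N : ℕ} (hf : Function.Periodic f N) (a : ℤ) :
    ∑ k ∈ range N, f (k + a) = ∑ k ∈ range N, f k := by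
  have step : ∀ g : ℤ → M, Function.Periodic g N →
      ∑ k ∈ range N, g (k + 1) = ∑ k ∈ range N, g k := by
    intro g hg
    have h := (sum_range_succ (fun k : ℕ => g k) N).symm.trans
      (sum_range_succ' (fun k : ℕ => g k) N)
    push_cast at h
    rw [show g N = g 0 by simpa using hg 0] at h
    exact (add_right_cancel h).symm
  induction a using Int.induction_on with
  | zero => simp
  | succ i ih =>
    rw [← ih, ← step _ (hf.add_const i)]
    exact sum_congr rfl fun k _ => congrArg f (by ring)
  | pred i ih =>
    rw [← ih, ← step _ (hf.add_const (-i - 1))]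
    exact sum_congr rfl fun k _ => congrArg f (by ring)

lemma isPrimitiveRoot_ww {N : ℕ} (hN : N ≠ 0) : IsPrimitiveRoot (ww N) N :=
  Complex.isPrimitiveRoot_exp N hN

lemma ww_ne_zero (N : ℕ) : ww N ≠ 0 := Complex.exp_ne_zero _

lemma ww_pow_self (N : ℕ) : ww N ^ N = 1 := by
  rcases eq_or_ne N 0 with rfl | hN
  · exact pow_zero _
  · exact (isPrimitiveRoot_ww hN).pow_eq_one

lemma norm_ww (N : ℕ) : ‖ww N‖ = 1 := by
  simp [ww, Complex.norm_exp]

lemma conj_ww_zpow (N : ℕ) (z : ℤ) : conj (ww N ^ z) = ww N ^ (-z) := by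
  rw [zpow_neg, Complex.inv_eq_conj (by rw [norm_zpow, norm_ww, one_zpow])]

lemma ww_zpow_mul_periodic (N : ℕ) (n : ℤ) :
    Function.Periodic (fun k : ℤ => ww N ^ (k * n)) N := by
  intro k
  simp only [add_mul, zpow_add₀ (ww_ne_zero N), zpow_mul, zpow_natCast, ww_pow_self, one_zpow,
    mul_one]

lemma sum_range_ww_zpow_mul {N : ℕ} (hN : N ≠ 0) (t : ℤ) :
    ∑ n ∈ range N, ww N ^ (t * n) = if (N : ℤ) ∣ t then (N : ℂ) else 0 := by
  have hζ := (isPrimitiveRoot_ww hN).zpow_eq_one_iff_dvd t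
  simp only [zpow_mul, zpow_natCast]
  split_ifs with ht
  · simp [hζ.mpr ht]
  · rw [geom_sum_eq (mt hζ.mp ht), ← zpow_natCast, ← zpow_mul, mul_comm, zpow_mul, zpow_natCast,
      ww_pow_self, one_zpow, sub_self, zero_div]

lemma sum_range_ww_zpow_sub_mul {N j j' : ℕ} (hj : j < N) (hj' : j' < N) :
    ∑ n ∈ range N, ww N ^ (((j' : ℤ) - j) * n) = if j = j' then (N : ℂ) else 0 := by
  rw [sum_range_ww_zpow_mul (by omega)]
  refine if_congr ⟨fun h => ?_, fun h => by simp [h]⟩ rfl rfl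
  have := Int.eq_zero_of_abs_lt_dvd h (by rw [abs_lt]; omega)
  omega

lemma dft_comp_sub {N : ℕ} {x : ℤ → ℂ} (hx : Function.Periodic x N) (a n : ℤ) :
    dft N (fun k => x (k - a)) n = ww N ^ (-(a * n)) * dft N x n := by
  have hper : Function.Periodic (fun k : ℤ => ww N ^ (-(k * n)) * x (k - a)) N := by
    simpa only [Pi.mul_def, mul_neg] using (ww_zpow_mul_periodic N (-n)).mul (hx.sub_const a)
  rw [dft, ← hper.sum_range_comp_add a, dft, mul_sum]
  refine sum_congr rfl fun k _ => ?_
  rw [add_sub_cancel_right, show -((k + a) * n) = -(a * n) + -(k * n) by ring,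
    zpow_add₀ (ww_ne_zero N), mul_assoc]

lemma sum_dft_mul_conj_dft (N : ℕ) (x y : ℤ → ℂ) :
    ∑ n ∈ range N, dft N x n * conj (dft N y n) = N * inner1 N x y := by
  calc ∑ n ∈ range N, dft N x n * conj (dft N y n)
      = ∑ j ∈ range N, ∑ j' ∈ range N,
          x j * conj (y j') * ∑ n ∈ range N, ww N ^ (((j' : ℤ) - j) * n) := by
        simp only [dft, map_sum, map_mul, conj_ww_zpow, sum_mul_sum]
        rw [sum_comm]
        refine sum_congr rfl fun j _ => ?_
        rw [sum_comm]
        refine sum_congr rfl fun j' _ => ?_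
        rw [mul_sum]
        refine sum_congr rfl fun n _ => ?_
        rw [show ((j' : ℤ) - j) * n = -(j * n) + - -(j' * n) by ring, zpow_add₀ (ww_ne_zero N)]
        ring
    _ = ∑ j ∈ range N, ∑ j' ∈ range N, x j * conj (y j') * if j = j' then (N : ℂ) else 0 :=
        sum_congr rfl fun j hj => sum_congr rfl fun j' hj' => by
          rw [sum_range_ww_zpow_sub_mul (mem_range.mp hj) (mem_range.mp hj')]
    _ = N * inner1 N x y := by
        simp only [mul_ite, mul_zero, sum_ite_eq, mem_range, inner1, mul_sum]
        exact sum_congr rfl fun j hj => by rw [if_pos (mem_range.mp hj), mul_comm]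

lemma inner1_comp_sub {N : ℕ} (hN : N ≠ 0) {x : ℤ → ℂ} (hx : Function.Periodic x N) (a : ℤ) :
    inner1 N x (fun k => x (k - a)) =
      (N : ℂ)⁻¹ * ∑ n ∈ range N, (Complex.normSq (dft N x n) : ℂ) * ww N ^ (a * n) := by
  rw [eq_inv_mul_iff_mul_eq₀ (Nat.cast_ne_zero.mpr hN), ← sum_dft_mul_conj_dft]
  refine sum_congr rfl fun n _ => ?_
  rw [dft_comp_sub hx, map_mul, conj_ww_zpow, neg_neg, ← Complex.mul_conj]
  ring

noncomputable def idft (N : ℕ) (c : ℕ → ℂ) (k : ℤ) : ℂ :=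
  (N : ℂ)⁻¹ * ∑ n ∈ range N, c n * ww N ^ (k * n)

lemma idft_periodic (N : ℕ) (c : ℕ → ℂ) : Function.Periodic (idft N c) N := by
  intro k
  simp only [idft, fun n : ℕ => ww_zpow_mul_periodic N n k]

lemma dft_idft {N : ℕ} (c : ℕ → ℂ) {n : ℕ} (hn : n < N) : dft N (idft N c) n = c n := by
  calc dft N (idft N c) n
      = (N : ℂ)⁻¹ * ∑ n' ∈ range N, c n' * ∑ k ∈ range N, ww N ^ (((n' : ℤ) - n) * k) := by
        simp only [dft, idft, mul_sum]
        rw [sum_comm]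
        refine sum_congr rfl fun n' _ => sum_congr rfl fun k _ => ?_
        rw [show ((n' : ℤ) - n) * k = -(k * n) + k * n' by ring, zpow_add₀ (ww_ne_zero N)]
        ring
    _ = (N : ℂ)⁻¹ * ∑ n' ∈ range N, c n' * if n = n' then (N : ℂ) else 0 := by
        congr 1
        exact sum_congr rfl fun n' hn' => by
          rw [sum_range_ww_zpow_sub_mul hn (mem_range.mp hn')]
    _ = c n := by
        simp only [mul_ite, mul_zero, sum_ite_eq, mem_range, if_pos hn]
        field_simp [show (N : ℂ) ≠ 0 from Nat.cast_ne_zero.mpr (by omega)]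

noncomputable def hilbertMultiplier (N n : ℕ) : ℂ :=
  if 0 < n ∧ n < N / 2 then -Complex.I else if N / 2 < n ∧ n < N then Complex.I else 0

lemma hilbertT_eq_idft (N : ℕ) (x : ℤ → ℂ) :
    hilbertT N x = idft N (fun n => hilbertMultiplier N n * dft N x n) := rfl

lemma hilbertT_periodic (N : ℕ) (x : ℤ → ℂ) : Function.Periodic (hilbertT N x) N := by
  rw [hilbertT_eq_idft]
  exact idft_periodic N _

lemma normSq_hilbertMultiplier {N n : ℕ} (h0 : n ≠ 0) (h2 : n ≠ N / 2) (hn : n < N) :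
    Complex.normSq (hilbertMultiplier N n) = 1 := by
  unfold hilbertMultiplier
  split_ifs <;> first | omega | simp

lemma normSq_dft_hilbertT {N : ℕ} {x : ℤ → ℂ} (h0 : dft N x 0 = 0)
    (h2 : dft N x ((N : ℤ) / 2) = 0) {n : ℕ} (hn : n < N) :
    Complex.normSq (dft N (hilbertT N x) n) = Complex.normSq (dft N x n) := by
  rw [hilbertT_eq_idft, dft_idft _ hn, Complex.normSq_mul]
  rcases eq_or_ne n 0 with rfl | hn0
  · simp [h0]
  rcases eq_or_ne n (N / 2) with rfl | hn2
  · simp [h2]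
  rw [normSq_hilbertMultiplier hn0 hn2 hn, one_mul]

theorem inner1_hilbertT_comp_sub {N : ℕ} (hN : N ≠ 0) {x : ℤ → ℂ}
    (hx : Function.Periodic x N) (h0 : dft N x 0 = 0) (h2 : dft N x ((N : ℤ) / 2) = 0) (a : ℤ) :
    inner1 N (hilbertT N x) (fun k => hilbertT N x (k - a)) = inner1 N x (fun k => x (k - a)) := by
  rw [inner1_comp_sub hN (hilbertT_periodic N x), inner1_comp_sub hN hx]
  congr 1
  exact sum_congr rfl fun n hn => by rw [normSq_dft_hilbertT h0 h2 (mem_range.mp hn)]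

theorem hilbert_shift_orthonormal_general (N : ℕ) (hN : 0 < N)
    (m : ℕ)
    (ψ : ℤ → ℂ) (hper : ∀ k : ℤ, ψ (k + N) = ψ k)
    (h0 : dft N ψ 0 = 0) (h2 : dft N ψ ((N : ℤ) / 2) = 0)
    (horth : ∀ l : ℕ, l < N / 2 ^ m →
      inner1 N ψ (fun k => ψ (k - ((2 ^ m * l : ℕ) : ℤ))) = if l = 0 then 1 else 0) :
    ∀ l : ℕ, l < N / 2 ^ m →
      inner1 N (hilbertT N ψ) (fun k => hilbertT N ψ (k - ((2 ^ m * l : ℕ) : ℤ)))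
        = if l = 0 then 1 else 0 := by
  intro l hl
  rw [inner1_hilbertT_comp_sub hN.ne' hper h0 h2]
  exact horth l hl

/-- If ψ̂[0] = ψ̂[N/2] = 0 and the 2^m-sample shifts of ψ are orthonormal,
    then the 2^m-sample shifts of θ = H(ψ) satisfy the same orthonormality relations. -/
theorem hilbert_shift_orthonormal (N : ℕ) (hN : 0 < N) (hNe : Even N)
    (m : ℕ) (hm : 1 ≤ m) (hdvd : 2 ^ m ∣ N)
    (ψ : ℤ → ℂ) (hper : ∀ k : ℤ, ψ (k + N) = ψ k)
    (h0 : dft N ψ 0 = 0) (h2 : dft N ψ ((N : ℤ) / 2) = 0)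
    (horth : ∀ l : ℕ, l < N / 2 ^ m →
      inner1 N ψ (fun k => ψ (k - ((2 ^ m * l : ℕ) : ℤ))) = if l = 0 then 1 else 0) :
    ∀ l : ℕ, l < N / 2 ^ m →
      inner1 N (hilbertT N ψ) (fun k => hilbertT N ψ (k - ((2 ^ m * l : ℕ) : ℤ)))
        = if l = 0 then 1 else 0 :=
  hilbert_shift_orthonormal_general N hN m ψ hper h0 h2 horth

end WP
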